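/- arXiv:2303.16176 — 2 statements merged into one kernel-verified Lean document; each statement's English description precedes it below -/
import Mathlib

section
/- Let X be a geometric tree and f:X→ℝ continuous with finitely many local minima X₁,…,Xₙ. For i≠j, the minimum over all t of the property 'X_i and X_j lie in the same connected component of f⁻¹(-∞,t]' equals the maximum of f over the shortest path between X_i and X_j in X. -/
open scoped Classical

noncomputable section

instance dartTop {V : Type*} (G : SimpleGraph V) : TopologicalSpace G.Dart := ⊥

/-- Gluing relation for the geometric realization of a graph: one copy of `[0,1]` per
oriented edge, opposite orientations identified by `t ↦ 1-t`, and starting points of edges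
with the same initial vertex identified. -/
def treeRel {V : Type*} (G : SimpleGraph V) :
    (G.Dart × ↥(Set.Icc (0:ℝ) 1)) → (G.Dart × ↥(Set.Icc (0:ℝ) 1)) → Prop :=
  fun p q =>
    (p.1 = q.1.symm ∧ (p.2 : ℝ) = 1 - (q.2 : ℝ)) ∨
    (p.1.toProd.1 = q.1.toProd.1 ∧ (p.2 : ℝ) = 0 ∧ (q.2 : ℝ) = 0)

/-- The geometric realization of a graph. -/
def TreeSpace {V : Type*} (G : SimpleGraph V) := Quot (treeRel G)

instance {V : Type*} (G : SimpleGraph V) : TopologicalSpace (TreeSpace G) :=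
  instTopologicalSpaceQuot
/-- Sublevel set of a function. -/
def sub {X : Type*} (f : X → ℝ) (t : ℝ) : Set X := {x | f x ≤ t}
/-- A local minimum of `f`: a connected set on which `f` is constant, such that every
connected set strictly containing it contains a point of strictly larger value. -/
def IsLocMin {X : Type*} [TopologicalSpace X] (f : X → ℝ) (M : Set X) : Prop :=
  IsConnected M ∧ (∃ c : ℝ, ∀ x ∈ M, f x = c) ∧
    ∀ M' : Set X, IsConnected M' → M ⊂ M' → ∃ x ∈ M', ∀ y ∈ M, f y < f x

/-- `A` and `B` lie in the same connected component of the sublevel set of `f` at `s`. -/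
def SameComp {X : Type*} [TopologicalSpace X] (f : X → ℝ) (A B : Set X) (s : ℝ) : Prop :=
  ∃ x ∈ A, ∃ y ∈ B, x ∈ sub f s ∧
    connectedComponentIn (sub f s) x = connectedComponentIn (sub f s) y

/-!
For an edge `d` of the tree, the coordinate along `d`, extended by `0` and `1` to the two
components of the tree with that edge removed, is continuous and takes every value in `(0, 1)`
exactly once. An injective path therefore crosses each such level at most once, so at every
point of the path interior to an edge this coordinate lies between its values at the endpoints,
and the intermediate value theorem puts that point into any preconnected set containing both
endpoints. The finitely many vertices on the path are then in the closure. For the component of a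
closed sublevel set containing both local minima this bounds `f` on the path by the level, while
the path itself joins the two minima at the level of its maximum.
-/

open Set Function

theorem mem_uIcc_of_injOn_preimage_Ioo {h : ℝ → ℝ} {x y τ a b : ℝ}
    (hc : ContinuousOn h (Icc x y)) (hinj : InjOn h (Icc x y ∩ h ⁻¹' Ioo a b))
    (hτ : τ ∈ Icc x y) (hτab : h τ ∈ Ioo a b) : h τ ∈ uIcc (h x) (h y) := by
  -- the IVT would take such an `r` once before and once after `τ`, contradicting injectivity
  have not_both_sides :
      ∀ r ∈ Ioo a b, r ≠ h τ → r ∈ uIcc (h x) (h τ) → r ∉ uIcc (h τ) (h y) := by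
    intro r hr hrτ hxτ hτy
    obtain ⟨s, hs, rfl⟩ := intermediate_value_uIcc
      (hc.mono (by rw [uIcc_of_le hτ.1]; exact Icc_subset_Icc_right hτ.2)) hxτ
    obtain ⟨s', hs', hss'⟩ := intermediate_value_uIcc
      (hc.mono (by rw [uIcc_of_le hτ.2]; exact Icc_subset_Icc_left hτ.1)) hτy
    rw [uIcc_of_le hτ.1] at hs
    rw [uIcc_of_le hτ.2] at hs'
    have : s' = s := hinj ⟨⟨hτ.1.trans hs'.1, hs'.2⟩, by rwa [mem_preimage, hss']⟩
      ⟨⟨hs.1, hs.2.trans hτ.2⟩, hr⟩ hss'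
    exact hrτ (by rw [le_antisymm hs.2 (this ▸ hs'.1)])
  by_contra hout
  rcases not_and_or.mp hout with hlt | hgt
  · obtain ⟨r, hτr, hr⟩ := exists_between (lt_min (not_le.mp hlt) hτab.2)
    have hrx := hr.trans_le ((min_le_left _ _).trans (min_le_left _ _))
    have hry := hr.trans_le ((min_le_left _ _).trans (min_le_right _ _))
    exact not_both_sides r ⟨hτab.1.trans hτr, hr.trans_le (min_le_right _ _)⟩ hτr.ne'
      (mem_uIcc.2 (Or.inr ⟨hτr.le, hrx.le⟩)) (mem_uIcc.2 (Or.inl ⟨hτr.le, hry.le⟩))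
  · obtain ⟨r, hr, hrτ⟩ := exists_between (max_lt (not_le.mp hgt) hτab.1)
    have hxr := ((le_max_left _ _).trans (le_max_left _ _)).trans_lt hr
    have hyr := ((le_max_right _ _).trans (le_max_left _ _)).trans_lt hr
    exact not_both_sides r ⟨(le_max_right _ _).trans_lt hr, hrτ.trans hτab.2⟩ hrτ.ne
      (mem_uIcc.2 (Or.inl ⟨hxr.le, hrτ.le⟩)) (mem_uIcc.2 (Or.inr ⟨hyr.le, hrτ.le⟩))

theorem Path.apply_mem_of_isPreconnected {X : Type*} [TopologicalSpace X] {p q : X}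
    (γ : Path p q) (hγ : Injective γ) {φ : X → ℝ} (hφ : Continuous φ) {a b : ℝ}
    (hφinj : InjOn φ (φ ⁻¹' Ioo a b)) {C : Set X} (hC : IsPreconnected C) (hp : p ∈ C)
    (hq : q ∈ C) {t : unitInterval} (ht : φ (γ t) ∈ Ioo a b) : γ t ∈ C := by
  have hinj : InjOn (φ ∘ γ.extend) (Icc 0 1 ∩ (φ ∘ γ.extend) ⁻¹' Ioo a b) := by
    rintro s ⟨hs, hsab⟩ s' ⟨hs', hs'ab⟩ hss'
    have := hφinj hsab hs'ab hss'
    rw [γ.extend_apply hs, γ.extend_apply hs'] at this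
    exact congrArg Subtype.val (hγ this)
  have hbetween := mem_uIcc_of_injOn_preimage_Ioo (hφ.comp γ.continuous_extend).continuousOn
    hinj t.2 (by rwa [comp_apply, γ.extend_apply t.2])
  simp only [comp_apply, Path.extend_zero, Path.extend_one, γ.extend_apply t.2,
    Subtype.coe_eta] at hbetween
  obtain ⟨w, hwC, hw⟩ := (hC.image φ hφ.continuousOn).ordConnected.uIcc_subset
    (mem_image_of_mem φ hp) (mem_image_of_mem φ hq) hbetween
  rwa [← hφinj (show w ∈ φ ⁻¹' Ioo a b by rwa [mem_preimage, hw]) ht hw]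

theorem Path.range_subset_closure_of_range_diff_subset {X : Type*} [TopologicalSpace X] {p q : X}
    (γ : Path p q) (hγ : Injective γ) {F C : Set X} (hF : F.Finite) (hC : range γ \ F ⊆ C) :
    range γ ⊆ closure C := by
  have hdense : Dense (γ ⁻¹' F)ᶜ := by
    simpa only [← compl_eq_univ_sdiff] using dense_univ.sdiff_finite (hF.preimage hγ.injOn)
  calc range γ = γ '' closure (γ ⁻¹' F)ᶜ := by rw [hdense.closure_eq, image_univ]
    _ ⊆ closure (γ '' (γ ⁻¹' F)ᶜ) := image_closure_subset_closure_image γ.continuous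
    _ ⊆ closure C := closure_mono fun _ ⟨t, ht, hx⟩ ↦ hC ⟨⟨t, hx⟩, hx ▸ ht⟩

namespace TreeSpace

open SimpleGraph unitInterval

variable {V : Type*} {G : SimpleGraph V}

instance : DiscreteTopology G.Dart := ⟨rfl⟩

def mk (e : G.Dart) (s : I) : TreeSpace G := Quot.mk _ (e, s)

theorem mk_eq_mk_symm (e : G.Dart) (s : I) : mk e s = mk e.symm (σ s) :=
  Quot.sound (Or.inl ⟨e.symm_symm.symm, by simp⟩)

variable (G) in
def vertexSet : Set (TreeSpace G) := range fun e : G.Dart ↦ mk e 0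

theorem finite_vertexSet [Fintype V] : (vertexSet G).Finite := finite_range _

theorem exists_eq_mk_of_notMem_vertexSet {x : TreeSpace G} (hx : x ∉ vertexSet G) :
    ∃ (e : G.Dart) (s : I), (s : ℝ) ∈ Ioo 0 1 ∧ x = mk e s := by
  obtain ⟨⟨e, s⟩, rfl⟩ := Quot.exists_rep x
  refine ⟨e, s, ⟨lt_of_le_of_ne s.2.1 fun hs ↦ hx ⟨e, ?_⟩,
    lt_of_le_of_ne s.2.2 fun hs ↦ hx ⟨e.symm, ?_⟩⟩, rfl⟩
  · exact congrArg (mk e) (Subtype.ext hs)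
  · change mk e.symm 0 = mk e s
    rw [mk_eq_mk_symm e, show s = 1 from Subtype.ext hs, symm_one]

def side (d : G.Dart) (w : V) : ℝ :=
  if (G.deleteEdges {d.edge}).Reachable d.fst w then 0 else 1

theorem side_fst (d : G.Dart) : side d d.fst = 0 := if_pos .rfl

theorem side_snd {d : G.Dart} (hd : G.IsBridge d.edge) : side d d.snd = 1 := if_neg hd

theorem side_eq_zero_or_one (d : G.Dart) (w : V) : side d w = 0 ∨ side d w = 1 := by
  unfold side; split_ifs <;> simp

theorem side_fst_eq_side_snd {d e : G.Dart} (h : e.edge ≠ d.edge) :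
    side d e.fst = side d e.snd := by
  have hadj : (G.deleteEdges {d.edge}).Adj e.fst e.snd := by
    rw [deleteEdges_adj]
    exact ⟨e.adj, h⟩
  unfold side
  exact if_congr ⟨(·.trans hadj.reachable), (·.trans hadj.symm.reachable)⟩ rfl rfl

/-- The coordinate along the edge of `d`, extended by `0` and `1` to the two sides of it. -/
def edgeCoord (d : G.Dart) : TreeSpace G → ℝ :=
  Quot.lift (fun x ↦ (1 - x.2) * side d x.1.fst + x.2 * side d x.1.snd) <| by
    rintro ⟨e, s⟩ ⟨e', s'⟩ (⟨rfl, hs⟩ | ⟨he, hs, hs'⟩)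
    · dsimp only at hs ⊢
      rw [hs, Dart.symm_toProd, Prod.fst_swap, Prod.snd_swap]
      ring
    · dsimp only at he hs hs' ⊢
      rw [hs, hs', he]
      ring

theorem continuous_edgeCoord (d : G.Dart) : Continuous (edgeCoord d) :=
  continuous_quot_lift _ (continuous_prod_of_discrete_left.mpr fun _ ↦ by dsimp only; fun_prop)

theorem edgeCoord_mk_self {d : G.Dart} (hd : G.IsBridge d.edge) (s : I) :
    edgeCoord d (mk d s) = s := by
  change (1 - s) * side d d.fst + s * side d d.snd = s
  rw [side_fst, side_snd hd]
  ring

theorem exists_eq_mk_of_edgeCoord_mem_Ioo {d : G.Dart} (hd : G.IsBridge d.edge)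
    {x : TreeSpace G} (hx : edgeCoord d x ∈ Ioo 0 1) : ∃ s, x = mk d s := by
  induction x using Quot.ind with | mk x => ?_
  obtain ⟨e, s⟩ := x
  change (1 - s) * side d e.fst + s * side d e.snd ∈ Ioo 0 1 at hx
  have hedge : e.edge = d.edge := by
    by_contra hne
    rw [← side_fst_eq_side_snd hne, ← add_mul, sub_add_cancel, one_mul] at hx
    rcases side_eq_zero_or_one d e.fst with h | h <;> simp [h] at hx
  rcases dart_edge_eq_iff e d |>.mp hedge with rfl | rfl
  · exact ⟨s, rfl⟩
  · exact ⟨σ s, by rw [← d.symm_symm, ← mk_eq_mk_symm, d.symm_symm]; rfl⟩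

theorem injOn_edgeCoord {d : G.Dart} (hd : G.IsBridge d.edge) :
    InjOn (edgeCoord d) (edgeCoord d ⁻¹' Ioo 0 1) := by
  intro x hx y hy hxy
  obtain ⟨s, rfl⟩ := exists_eq_mk_of_edgeCoord_mem_Ioo hd hx
  obtain ⟨s', rfl⟩ := exists_eq_mk_of_edgeCoord_mem_Ioo hd hy
  rw [edgeCoord_mk_self hd, edgeCoord_mk_self hd] at hxy
  rw [Subtype.ext hxy]

theorem range_subset_closure_of_isPreconnected [Fintype V] (hG : G.IsAcyclic)
    {p q : TreeSpace G} (γ : Path p q) (hγ : Injective γ) {C : Set (TreeSpace G)}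
    (hC : IsPreconnected C) (hp : p ∈ C) (hq : q ∈ C) : range γ ⊆ closure C := by
  refine γ.range_subset_closure_of_range_diff_subset hγ finite_vertexSet ?_
  rintro _ ⟨⟨t, rfl⟩, hv⟩
  obtain ⟨d, s, hs, hds⟩ := exists_eq_mk_of_notMem_vertexSet hv
  have hd : G.IsBridge d.edge := isAcyclic_iff_forall_adj_isBridge.mp hG d.adj
  exact γ.apply_mem_of_isPreconnected hγ (continuous_edgeCoord d) (injOn_edgeCoord hd) hC hp hq
    (by rwa [hds, edgeCoord_mk_self hd])

end TreeSpace

section SublevelComponents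

variable {X : Type*} [TopologicalSpace X] {f : X → ℝ} {A B C : Set X} {s : ℝ}

theorem sameComp_of_isPreconnected (hC : IsPreconnected C) (hCs : C ⊆ sub f s) {x y : X}
    (hx : x ∈ A ∩ C) (hy : y ∈ B ∩ C) : SameComp f A B s :=
  ⟨x, hx.1, y, hy.1, hCs hx.2,
    connectedComponentIn_eq (hC.subset_connectedComponentIn hx.2 hCs hy.2)⟩

theorem SameComp.exists_isPreconnected (h : SameComp f A B s) (hA : IsPreconnected A)
    (hfA : ∃ c, ∀ x ∈ A, f x = c) (hB : IsPreconnected B)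
    (hfB : ∃ c, ∀ x ∈ B, f x = c) :
    ∃ C, IsPreconnected C ∧ A ⊆ C ∧ B ⊆ C ∧ C ⊆ sub f s := by
  obtain ⟨x, hxA, y, hyB, hx, hxy⟩ := h
  obtain ⟨a, ha⟩ := hfA
  obtain ⟨b, hb⟩ := hfB
  have hy : y ∈ sub f s :=
    connectedComponentIn_nonempty_iff.mp (hxy ▸ ⟨x, mem_connectedComponentIn hx⟩)
  refine ⟨connectedComponentIn (sub f s) x, isPreconnected_connectedComponentIn,
    hA.subset_connectedComponentIn hxA fun z hz ↦ ?_,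
    hxy ▸ hB.subset_connectedComponentIn hyB fun z hz ↦ ?_, connectedComponentIn_subset _ _⟩
  · change f z ≤ s
    rwa [ha z hz, ← ha x hxA]
  · change f z ≤ s
    rwa [hb z hz, ← hb y hyB]

end SublevelComponents

theorem stmt8_general {V : Type} [Fintype V] (G : SimpleGraph V)
    (hacyc : G.IsAcyclic)
    (f : TreeSpace G → ℝ) (hf : Continuous f)
    (Xi Xj : Set (TreeSpace G)) (hXi : IsLocMin f Xi) (hXj : IsLocMin f Xj)
    (p q : TreeSpace G) (γ : Path p q) (hp : p ∈ Xi) (hq : q ∈ Xj)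
    (hinj : Function.Injective γ) :
    IsGreatest (f '' Set.range γ) (sSup (f '' Set.range γ)) ∧
    IsLeast {s : ℝ | SameComp f Xi Xj s} (sSup (f '' Set.range γ)) := by
  have hmax : IsGreatest (f '' range γ) (sSup (f '' range γ)) :=
    (isCompact_range γ.continuous |>.image hf).isGreatest_sSup ((range_nonempty γ).image f)
  have hpath : range γ ⊆ sub f (sSup (f '' range γ)) :=
    fun z hz ↦ hmax.2 (mem_image_of_mem f hz)
  refine ⟨hmax, sameComp_of_isPreconnected (isPreconnected_range γ.continuous) hpath
    ⟨hp, 0, γ.source⟩ ⟨hq, 1, γ.target⟩, fun s hs ↦ ?_⟩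
  obtain ⟨C, hC, hXiC, hXjC, hCs⟩ :=
    hs.exists_isPreconnected hXi.1.isPreconnected hXi.2.1 hXj.1.isPreconnected hXj.2.1
  obtain ⟨z, hz, hfz⟩ := hmax.1
  rw [← hfz]
  have hzC :=
    TreeSpace.range_subset_closure_of_isPreconnected hacyc γ hinj hC (hXiC hp) (hXjC hq) hz
  exact (isClosed_le hf continuous_const).closure_subset_iff.mpr hCs hzC

/-- On a geometric tree, for a continuous function with finitely many local minima and two
disjoint local minima `Xi`, `Xj`, the least level at which `Xi` and `Xj` lie in the same
connected component of the sublevel set equals the maximum of `f` over the shortest path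
between `Xi` and `Xj` (the injective path meeting `Xi`, `Xj` only at its endpoints). -/
theorem stmt8 {V : Type} [Fintype V] (G : SimpleGraph V)
    (hconn : G.Connected) (hacyc : G.IsAcyclic)
    (f : TreeSpace G → ℝ) (hf : Continuous f)
    (hmin : {M : Set (TreeSpace G) | IsLocMin f M}.Finite)
    (Xi Xj : Set (TreeSpace G)) (hXi : IsLocMin f Xi) (hXj : IsLocMin f Xj)
    (hdisj : Disjoint Xi Xj)
    (p q : TreeSpace G) (γ : Path p q) (hp : p ∈ Xi) (hq : q ∈ Xj)
    (hinj : Function.Injective γ)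
    (hγi : Set.range γ ∩ Xi = {p}) (hγj : Set.range γ ∩ Xj = {q}) :
    IsGreatest (f '' Set.range γ) (sSup (f '' Set.range γ)) ∧
    IsLeast {s : ℝ | SameComp f Xi Xj s} (sSup (f '' Set.range γ)) :=
  stmt8_general G hacyc f hf Xi Xj hXi hXj p q γ hp hq hinj
end
end

section
/- Let (T,π) be a cellular merge tree with zero-dimensional barcode D. Then for every branch point v of T, π(v) is the right endpoint of some interval of D, and for every leaf l of T, π(l) is the left endpoint of some interval of D. -/
open scoped Classical

noncomputable section

/-- Map on path components induced by an inclusion of subsets. -/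
def pcMap {X : Type*} [TopologicalSpace X] {S T : Set X} (h : S ⊆ T) :
    ZerothHomotopy ↥S → ZerothHomotopy ↥T :=
  Quotient.map' (Set.inclusion h) (fun _ _ hxy => ⟨hxy.somePath.map (continuous_inclusion h)⟩)

/-- `f` has zero-dimensional barcode `D` (a multiset of half-open intervals `[b,d)`,
encoded as pairs `(b,d)` with `d` possibly `⊤`), expressed via the rank invariant: for
`s ≤ t` the rank of `H₀(f⁻¹(-∞,s]) → H₀(f⁻¹(-∞,t])` (i.e. the number of path components of
the `t`-sublevel set hit from the `s`-sublevel set) equals the number of intervals of `D`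
containing `[s,t]`. -/
def HasBarcode {X : Type*} [TopologicalSpace X] (f : X → ℝ) (D : Multiset (ℝ × EReal)) : Prop :=
  (∀ I ∈ D, (I.1 : EReal) < I.2) ∧
  ∀ s t : ℝ, (h : s ≤ t) →
    Nat.card (Set.range (pcMap (X := X) (S := sub f s) (T := sub f t)
      (fun _ hx => le_trans hx h))) =
    (D.filter (fun I => I.1 ≤ s ∧ (t : EReal) < I.2)).card
/-- Combinatorial data for a cellular merge tree: a finite rooted tree with a real value at
each node, strictly increasing towards the root; the root carries an infinite upward ray. -/
structure MergeTreeData where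
  n : ℕ
  parent : Fin n → Fin n
  root : Fin n
  hroot : parent root = root
  hreach : ∀ v, ∃ k, parent^[k] v = root
  val : Fin n → ℝ
  hval : ∀ v, v ≠ root → val v < val (parent v)

namespace MergeTreeData

variable (d : MergeTreeData)

/-- Points of the edge attached below each node (for the root: the infinite upward ray). -/
def Carrier : Set (Fin d.n × ℝ) :=
  {p | d.val p.1 ≤ p.2 ∧ (p.1 ≠ d.root → p.2 ≤ d.val (d.parent p.1))}

/-- Glue the top of each edge to the bottom of the parent's edge. -/
def glueRel : ↥d.Carrier → ↥d.Carrier → Prop := fun a b =>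
  a.1.2 = b.1.2 ∧ d.parent a.1.1 = b.1.1 ∧ a.1.2 = d.val (d.parent a.1.1)

/-- The geometric realization of the cellular merge tree `d`. -/
def Space := Quot d.glueRel

instance : TopologicalSpace d.Space := instTopologicalSpaceQuot

/-- The gauge of the canonical cellular merge tree. -/
def gauge : d.Space → ℝ := Quot.lift (fun a => a.1.2) (fun _ _ h => h.1)

/-- `v` is a descendant of `w` (possibly `v = w`). -/
def Desc (v w : Fin d.n) : Prop := ∃ k, d.parent^[k] v = w

def IsLeafNode (v : Fin d.n) : Prop := ∀ w, d.parent w = v → w = v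

def IsBranchNode (v : Fin d.n) : Prop := 2 ≤ Nat.card {w : Fin d.n // d.parent w = v ∧ w ≠ v}

/-- Generic: binary (each node has zero or two children) and leaves take distinct values. -/
def Generic : Prop :=
  (∀ v, Nat.card {w : Fin d.n // d.parent w = v ∧ w ≠ v} = 0 ∨
        Nat.card {w : Fin d.n // d.parent w = v ∧ w ≠ v} = 2) ∧
  ∀ v w, d.IsLeafNode v → d.IsLeafNode w → v ≠ w → d.val v ≠ d.val w

/-- `a` is the least common ancestor of `u` and `w`. -/
def IsLCA (u w a : Fin d.n) : Prop :=
  d.Desc u a ∧ d.Desc w a ∧ ∀ b, d.Desc u b → d.Desc w b → d.Desc a b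

/-- The type of leaves. -/
def Leaf := {v : Fin d.n // d.IsLeafNode v}

end MergeTreeData

namespace MergeTreeData

variable (d : MergeTreeData)

lemma val_le_parent (v : Fin d.n) : d.val v ≤ d.val (d.parent v) := by
  by_cases h : v = d.root
  · subst h; rw [d.hroot]
  · exact (d.hval v h).le

lemma val_le_iter (k : ℕ) (v : Fin d.n) : d.val v ≤ d.val (d.parent^[k] v) := by
  induction k generalizing v with
  | zero => simp
  | succ k ih =>
    rw [Function.iterate_succ_apply]
    exact (d.val_le_parent v).trans (ih _)

lemma desc_val_le {a b : Fin d.n} (h : d.Desc a b) : d.val a ≤ d.val b := by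
  obtain ⟨k, rfl⟩ := h; exact d.val_le_iter k a

lemma desc_of_parent {w u : Fin d.n} (h : d.Desc (d.parent w) u) : d.Desc w u := by
  obtain ⟨k, hk⟩ := h
  exact ⟨k + 1, by rw [Function.iterate_succ_apply]; exact hk⟩

lemma desc_cases {w u : Fin d.n} (h : d.Desc w u) : w = u ∨ d.Desc (d.parent w) u := by
  obtain ⟨k, hk⟩ := h
  cases k with
  | zero => exact Or.inl hk
  | succ k => exact Or.inr ⟨k, by rw [Function.iterate_succ_apply] at hk; exact hk⟩

lemma eq_root_of_parent_eq {v : Fin d.n} (h : d.parent v = v) : v = d.root := by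
  obtain ⟨k, hk⟩ := d.hreach v
  rw [Function.iterate_fixed h k] at hk
  exact hk

lemma not_desc_parent {u : Fin d.n} (h : d.parent u ≠ u) : ¬ d.Desc (d.parent u) u := by
  intro hd
  have hur : u ≠ d.root := fun hr => h (by rw [hr, d.hroot])
  exact absurd (d.desc_val_le hd) (not_le.mpr (d.hval u hur))

/-- A point of the realization. -/
def pt (w : Fin d.n) (r : ℝ) (h1 : d.val w ≤ r)
    (h2 : w ≠ d.root → r ≤ d.val (d.parent w)) : d.Space :=
  Quot.mk _ (⟨(w, r), h1, h2⟩ : ↥d.Carrier)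

@[simp] lemma gauge_pt (w : Fin d.n) (r : ℝ) (h1 h2) :
    d.gauge (d.pt w r h1 h2) = r := rfl

lemma mem_sub_pt {t : ℝ} {w : Fin d.n} {r : ℝ} {h1 h2} (h : r ≤ t) :
    d.pt w r h1 h2 ∈ sub d.gauge t := h

lemma joined_seg {c : ℝ} {w : Fin d.n} {r₀ r₁ : ℝ}
    (hw0 : d.val w ≤ r₀) (hw1 : d.val w ≤ r₁)
    (hp0 : w ≠ d.root → r₀ ≤ d.val (d.parent w))
    (hp1 : w ≠ d.root → r₁ ≤ d.val (d.parent w))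
    (hc0 : r₀ ≤ c) (hc1 : r₁ ≤ c) :
    Joined (X := ↥(sub d.gauge c)) ⟨d.pt w r₀ hw0 hp0, hc0⟩ ⟨d.pt w r₁ hw1 hp1, hc1⟩ := by
  have hmem : ∀ t : unitInterval, d.val w ≤ (1 - t.1) * r₀ + t.1 * r₁ := by
    intro t; nlinarith [t.2.1, t.2.2]
  have hpar : ∀ t : unitInterval, w ≠ d.root →
      (1 - t.1) * r₀ + t.1 * r₁ ≤ d.val (d.parent w) := by
    intro t hw; nlinarith [t.2.1, t.2.2, hp0 hw, hp1 hw]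
  have hsub : ∀ t : unitInterval, (1 - t.1) * r₀ + t.1 * r₁ ≤ c := by
    intro t; nlinarith [t.2.1, t.2.2]
  refine ⟨{ toFun := fun t => ⟨d.pt w ((1 - t.1) * r₀ + t.1 * r₁) (hmem t) (hpar t), hsub t⟩,
            continuous_toFun := ?_, source' := ?_, target' := ?_ }⟩
  · apply Continuous.subtype_mk
    apply continuous_quot_mk.comp
    apply Continuous.subtype_mk
    fun_prop
  · apply Subtype.ext
    unfold pt
    apply congrArg
    apply Subtype.ext
    have h0 : ((w, (1 - ((0:unitInterval):ℝ)) * r₀ + ((0:unitInterval):ℝ) * r₁) : Fin d.n × ℝ) = (w, r₀) := by norm_num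
    exact congrArg (Quot.mk d.glueRel) (Subtype.ext h0)
  · apply Subtype.ext
    unfold pt
    apply congrArg
    apply Subtype.ext
    have h0 : ((w, (1 - ((1:unitInterval):ℝ)) * r₀ + ((1:unitInterval):ℝ) * r₁) : Fin d.n × ℝ) = (w, r₁) := by norm_num
    exact congrArg (Quot.mk d.glueRel) (Subtype.ext h0)

lemma not_joined_of_sep {s : ℝ} {x y : ↥(sub d.gauge s)}
    (F : d.Space → ℝ) (hF : Continuous F)
    (h01 : ∀ z : d.Space, d.gauge z ≤ s → F z = 0 ∨ F z = 1)
    (hx : F x.1 = 1) (hy : F y.1 = 0) : ¬ Joined x y := by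
  rintro ⟨p⟩
  have hG : Continuous fun t : unitInterval => F (p t).1 :=
    hF.comp (continuous_subtype_val.comp p.continuous)
  have hmem : (1/2 : ℝ) ∈ Set.Icc (F (p 1).1) (F (p 0).1) := by
    rw [p.source, p.target, hx, hy]; norm_num
  obtain ⟨t, ht⟩ := intermediate_value_univ 1 0 hG hmem
  have ht' : F (p t).1 = 1/2 := ht
  rcases h01 (p t).1 (p t).2 with h | h <;> rw [h] at ht' <;> norm_num at ht'

section Branch

variable {d : MergeTreeData} {u₁ u₂ : Fin d.n} {s : ℝ}

/-- The ramp function for the branch separating function. -/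
private def bramp (c s : ℝ) (r : ℝ) : ℝ := max 0 (min 1 ((c - r) / (c - s)))

private lemma bramp_cont (c s : ℝ) : Continuous (bramp c s) := by
  unfold bramp; fun_prop

private lemma bramp_of_le {c s r : ℝ} (hr : r ≤ s) (hsc : s < c) : bramp c s r = 1 := by
  have h1 : (1:ℝ) ≤ (c - r) / (c - s) := by
    rw [le_div_iff₀ (by linarith)]; linarith
  unfold bramp
  rw [min_eq_left h1, max_eq_right zero_le_one]

private lemma bramp_self (c s : ℝ) : bramp c s c = 0 := by
  unfold bramp
  rw [sub_self, zero_div, min_eq_right zero_le_one, max_self]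

lemma branch_not_joined (hp1 : d.parent u₁ ≠ u₁) (h12 : u₁ ≠ u₂)
    (hpar : d.parent u₂ = d.parent u₁)
    (hs1 : d.val u₁ ≤ s) (hs2 : d.val u₂ ≤ s) (hsc : s < d.val (d.parent u₁)) :
    ¬ Joined (X := ↥(sub d.gauge s))
      ⟨d.pt u₁ s hs1 (fun _ => hsc.le), d.mem_sub_pt le_rfl⟩
      ⟨d.pt u₂ s hs2 (fun _ => by rw [hpar]; exact hsc.le), d.mem_sub_pt le_rfl⟩ := by
  set c := d.val (d.parent u₁) with hc
  let g : ↥d.Carrier → ℝ :=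
    fun a => (if d.Desc a.1.1 u₁ then (1:ℝ) else 0) * bramp c s a.1.2
  have hnd : ¬ d.Desc (d.parent u₁) u₁ := d.not_desc_parent hp1
  have hcompat : ∀ a b, d.glueRel a b → g a = g b := by
    rintro ⟨⟨w, t⟩, hw⟩ ⟨⟨w', t'⟩, hw'⟩ ⟨h1, h2, h3⟩
    simp only at h1 h2 h3
    subst h1
    show (if d.Desc w u₁ then (1:ℝ) else 0) * bramp c s t =
      (if d.Desc w' u₁ then (1:ℝ) else 0) * bramp c s t
    by_cases hd : d.Desc w u₁
    · rcases d.desc_cases hd with heq | hd'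
      · have ht : t = c := by rw [h3, heq]
        have hnw' : ¬ d.Desc w' u₁ := by rw [← h2, heq]; exact hnd
        rw [if_pos hd, if_neg hnw', ht, bramp_self, mul_zero, zero_mul]
      · have : d.Desc w' u₁ := by rw [← h2]; exact hd'
        rw [if_pos hd, if_pos this]
    · have : ¬ d.Desc w' u₁ := fun h => hd (d.desc_of_parent (h2 ▸ h))
      rw [if_neg hd, if_neg this]
  have hgc : Continuous g := by
    apply Continuous.mul
    · exact (continuous_of_discreteTopology
        (f := fun w : Fin d.n => (if d.Desc w u₁ then (1:ℝ) else 0))).comp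
        (continuous_fst.comp continuous_subtype_val)
    · exact (bramp_cont c s).comp (continuous_snd.comp continuous_subtype_val)
  have hnd2 : ¬ d.Desc u₂ u₁ := by
    intro h
    rcases d.desc_cases h with heq | h'
    · exact h12 heq.symm
    · rw [hpar] at h'; exact hnd h'
  apply d.not_joined_of_sep (Quot.lift g hcompat) (continuous_quot_lift hcompat hgc)
  · intro z hz
    revert hz
    induction z using Quot.ind with
    | mk a =>
    obtain ⟨⟨w, r⟩, hw⟩ := a
    intro hz
    have hr : r ≤ s := hz
    show (if d.Desc w u₁ then (1:ℝ) else 0) * bramp c s r = 0 ∨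
      (if d.Desc w u₁ then (1:ℝ) else 0) * bramp c s r = 1
    by_cases hd : d.Desc w u₁
    · right; rw [if_pos hd, bramp_of_le hr hsc, one_mul]
    · left; rw [if_neg hd, zero_mul]
  · show (if d.Desc u₁ u₁ then (1:ℝ) else 0) * bramp c s s = 1
    have hd : d.Desc u₁ u₁ := ⟨0, rfl⟩
    rw [if_pos hd, bramp_of_le (le_refl s) hsc, one_mul]
  · show (if d.Desc u₂ u₁ then (1:ℝ) else 0) * bramp c s s = 0
    rw [if_neg hnd2, zero_mul]

lemma branch_joined (hs1 : d.val u₁ ≤ s) (hs2 : d.val u₂ ≤ s)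
    (hpar : d.parent u₂ = d.parent u₁)
    (hsc : s < d.val (d.parent u₁)) :
    Joined (X := ↥(sub d.gauge (d.val (d.parent u₁))))
      ⟨d.pt u₁ s hs1 (fun _ => hsc.le), d.mem_sub_pt hsc.le⟩
      ⟨d.pt u₂ s hs2 (fun _ => by rw [hpar]; exact hsc.le), d.mem_sub_pt hsc.le⟩ := by
  set c := d.val (d.parent u₁) with hc
  have hv1 : d.val u₁ ≤ c := (d.val_le_parent u₁)
  have hv2 : d.val u₂ ≤ c := by rw [hc, ← hpar]; exact d.val_le_parent u₂
  have j1 : Joined (X := ↥(sub d.gauge c))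
      ⟨d.pt u₁ s hs1 (fun _ => hsc.le), d.mem_sub_pt hsc.le⟩
      ⟨d.pt u₁ c hv1 (fun _ => le_rfl), d.mem_sub_pt le_rfl⟩ :=
    d.joined_seg hs1 hv1 (fun _ => hsc.le) (fun _ => le_rfl) hsc.le le_rfl
  have j2 : Joined (X := ↥(sub d.gauge c))
      ⟨d.pt u₂ c hv2 (fun _ => by rw [hpar]), d.mem_sub_pt le_rfl⟩
      ⟨d.pt u₂ s hs2 (fun _ => by rw [hpar]; exact hsc.le), d.mem_sub_pt hsc.le⟩ :=
    d.joined_seg hv2 hs2 (fun _ => by rw [hpar]) (fun _ => by rw [hpar]; exact hsc.le)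
      le_rfl hsc.le
  have hmem : ((d.parent u₁, c) : Fin d.n × ℝ) ∈ d.Carrier :=
    ⟨le_rfl, fun _ => d.val_le_parent (d.parent u₁)⟩
  have e1 : d.pt u₁ c hv1 (fun _ => le_rfl) = Quot.mk _ (⟨(d.parent u₁, c), hmem⟩ : ↥d.Carrier) :=
    Quot.sound ⟨rfl, rfl, rfl⟩
  have e2 : d.pt u₂ c hv2 (fun _ => by rw [hpar]) =
      Quot.mk _ (⟨(d.parent u₁, c), hmem⟩ : ↥d.Carrier) :=
    Quot.sound ⟨rfl, hpar, by show c = d.val (d.parent u₂); rw [hpar]⟩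
  have emid : (⟨d.pt u₁ c hv1 (fun _ => le_rfl), d.mem_sub_pt le_rfl⟩ : ↥(sub d.gauge c)) =
      ⟨d.pt u₂ c hv2 (fun _ => by rw [hpar]), d.mem_sub_pt le_rfl⟩ :=
    Subtype.ext (e1.trans e2.symm)
  exact j1.trans (by rw [emid]; exact j2)

end Branch

section LeafSep

variable {d : MergeTreeData} {l : Fin d.n} {s' : ℝ}

private def lramp (b s' vp : ℝ) (htop : Bool) (r : ℝ) : ℝ :=
  max 0 (min ((r - s') / (b - s')) (if htop then 1 else (vp - r) / (vp - b)))

private lemma lramp_cont (b s' vp : ℝ) (htop : Bool) : Continuous (lramp b s' vp htop) := by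
  unfold lramp
  cases htop <;> simp <;> fun_prop

private lemma lramp_b {b s' vp : ℝ} {htop : Bool} (hs : s' < b) (hvp : htop = false → b < vp) :
    lramp b s' vp htop b = 1 := by
  unfold lramp
  have h1 : (b - s') / (b - s') = 1 := div_self (by linarith)
  cases htop with
  | true => rw [h1]; simp
  | false =>
    have h2 : (vp - b) / (vp - b) = 1 := div_self (by have := hvp rfl; linarith)
    rw [h1]; simp [h2]

private lemma lramp_le {b s' vp r : ℝ} {htop : Bool} (hr : r ≤ s') (hs : s' < b) :
    lramp b s' vp htop r = 0 := by
  unfold lramp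
  have h1 : (r - s') / (b - s') ≤ 0 :=
    div_nonpos_of_nonpos_of_nonneg (by linarith) (by linarith)
  exact max_eq_left ((min_le_left _ _).trans h1)

private lemma lramp_vp {b s' vp : ℝ} {htop : Bool} (h : htop = false) :
    lramp b s' vp htop vp = 0 := by
  unfold lramp
  subst h
  simp only [Bool.false_eq_true, if_false, sub_self, zero_div]
  exact max_eq_left ((min_le_right _ _).trans le_rfl)

lemma leaf_not_joined (hl : d.IsLeafNode l) (hs : s' < d.val l) :
    ∀ (z : ↥(sub d.gauge (d.val l))), d.gauge z.1 ≤ s' →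
      ¬ Joined z ⟨d.pt l (d.val l) le_rfl (fun h => (d.hval l h).le), d.mem_sub_pt le_rfl⟩ := by
  set b := d.val l with hb
  set vp := d.val (d.parent l) with hvp
  set htop : Bool := decide (d.parent l = l) with htop_def
  have hvpb : htop = false → b < vp := by
    intro h
    have hne : d.parent l ≠ l := by
      intro hpl; rw [htop_def, decide_eq_true hpl] at h; exact absurd h (by simp)
    exact d.hval l (fun hr => hne (by rw [hr, d.hroot]))
  let g : ↥d.Carrier → ℝ :=
    fun a => (if a.1.1 = l then (1:ℝ) else 0) * lramp b s' vp htop a.1.2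
  have hcompat : ∀ a b', d.glueRel a b' → g a = g b' := by
    rintro ⟨⟨w, t⟩, hw⟩ ⟨⟨w', t'⟩, hw'⟩ ⟨h1, h2, h3⟩
    simp only at h1 h2 h3
    subst h1
    show (if w = l then (1:ℝ) else 0) * lramp b s' vp htop t =
      (if w' = l then (1:ℝ) else 0) * lramp b s' vp htop t
    by_cases hwl : w = l
    · by_cases hpl : d.parent l = l
      · have hw'l : w' = l := by rw [← h2, hwl, hpl]
        rw [if_pos hwl, if_pos hw'l]
      · have ht : t = vp := by rw [h3, hwl]
        have hnf : htop = false := by rw [htop_def, decide_eq_false hpl]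
        have hw'l : w' ≠ l := by rw [← h2, hwl]; exact hpl
        rw [if_pos hwl, if_neg hw'l, ht, lramp_vp hnf, mul_zero, zero_mul]
    · have hw'l : w' ≠ l := by
        rw [← h2]; intro h
        exact hwl (hl w h)
      rw [if_neg hwl, if_neg hw'l]
  have hgc : Continuous g := by
    apply Continuous.mul
    · exact (continuous_of_discreteTopology
        (f := fun w : Fin d.n => (if w = l then (1:ℝ) else 0))).comp
        (continuous_fst.comp continuous_subtype_val)
    · exact (lramp_cont b s' vp htop).comp (continuous_snd.comp continuous_subtype_val)
  have hF0 : ∀ z0 : d.Space, d.gauge z0 ≤ s' → Quot.lift g hcompat z0 = 0 := by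
    intro z0 hz0
    revert hz0
    induction z0 using Quot.ind with
    | mk a =>
    obtain ⟨⟨w, r⟩, hw1, hw2⟩ := a
    intro hz0
    have hr : r ≤ s' := hz0
    have hwl : w ≠ l := by
      intro h; subst h
      exact absurd (hw1.trans hr) (not_le.mpr hs)
    show (if w = l then (1:ℝ) else 0) * lramp b s' vp htop r = 0
    rw [if_neg hwl, zero_mul]
  intro z hz hjoin
  apply d.not_joined_of_sep (Quot.lift g hcompat) (continuous_quot_lift hcompat hgc)
    ?_ ?_ (hF0 z.1 hz) hjoin.symm
  · intro z' hz'
    revert hz'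
    induction z' using Quot.ind with
    | mk a =>
    obtain ⟨⟨w, r⟩, hw1, hw2⟩ := a
    intro hz'
    have hr : r ≤ b := hz'
    show (if w = l then (1:ℝ) else 0) * lramp b s' vp htop r = 0 ∨
      (if w = l then (1:ℝ) else 0) * lramp b s' vp htop r = 1
    by_cases hwl : w = l
    · right
      have hrb : r = b := le_antisymm hr (by rw [hb, ← hwl]; exact hw1)
      rw [if_pos hwl, hrb, lramp_b hs hvpb, one_mul]
    · left; rw [if_neg hwl, zero_mul]
  · show (if l = l then (1:ℝ) else 0) * lramp b s' vp htop b = 1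
    rw [if_pos rfl, lramp_b hs hvpb, one_mul]

end LeafSep

section NodeJoined

variable {d : MergeTreeData}

lemma exists_node_joined {t : ℝ} (z : ↥(sub d.gauge t)) :
    ∃ w : Fin d.n, ∃ h : d.val w ≤ t,
      Joined z ⟨d.pt w (d.val w) le_rfl (fun _ => d.val_le_parent w), d.mem_sub_pt h⟩ := by
  obtain ⟨z, hz⟩ := z
  revert hz
  induction z using Quot.ind with
  | mk a =>
  obtain ⟨⟨w, r⟩, hw1, hw2⟩ := a
  intro hz
  have hr : r ≤ t := hz
  refine ⟨w, hw1.trans hr, ?_⟩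
  exact d.joined_seg hw1 le_rfl hw2 (fun _ => d.val_le_parent w) hr (hw1.trans hr)

end NodeJoined

end MergeTreeData


/-- Isomorphism of gauged spaces: a homeomorphism commuting with the gauges. -/
def GaugedIso {A B : Type*} [TopologicalSpace A] [TopologicalSpace B]
    (πA : A → ℝ) (πB : B → ℝ) : Prop :=
  ∃ e : A ≃ₜ B, ∀ x, πB (e x) = πA x

/-- A gauged space is a cellular merge tree if it is isomorphic (as a gauged space) to the
realization of some combinatorial merge tree data. -/
def IsCellularMergeTree {A : Type*} [TopologicalSpace A] (π : A → ℝ) : Prop :=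
  ∃ d : MergeTreeData, GaugedIso d.gauge π

lemma filter_card_le_of_imp {α : Type*} (D : Multiset α) (p q : α → Prop)
    [DecidablePred p] [DecidablePred q]
    (h : ∀ I ∈ D, p I → q I) :
    (D.filter p).card ≤ (D.filter q).card := by
  have h1 : D.filter p = D.filter (fun I => p I ∧ q I) :=
    Multiset.filter_congr (fun I hI => ⟨fun hp => ⟨hp, h I hI hp⟩, fun hh => hh.1⟩)
  rw [h1]
  exact Multiset.card_le_card (Multiset.monotone_filter_right D (fun b hb => hb.2))

lemma card_range_lt {α β : Type*} [Finite α] (f : α → β) {a b : α}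
    (hab : a ≠ b) (hf : f a = f b) :
    Nat.card (Set.range f) < Nat.card α := by
  have hr : Set.range f = f '' (Set.univ \ {b}) := by
    apply Set.Subset.antisymm
    · rintro _ ⟨x, rfl⟩
      by_cases hx : x = b
      · exact ⟨a, ⟨trivial, hab⟩, by rw [hf, hx]⟩
      · exact ⟨x, ⟨trivial, hx⟩, rfl⟩
    · rintro _ ⟨x, _, rfl⟩
      exact ⟨x, rfl⟩
  calc Nat.card (Set.range f) = (Set.range f).ncard := Nat.card_coe_set_eq _
    _ = (f '' (Set.univ \ {b})).ncard := by rw [hr]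
    _ ≤ (Set.univ \ {b}).ncard := Set.ncard_image_le (Set.toFinite _)
    _ < (Set.univ : Set α).ncard :=
        Set.ncard_diff_singleton_lt_of_mem trivial (Set.toFinite _)
    _ = Nat.card α := Set.ncard_univ α

lemma card_range_lt_of_notMem {α β : Type*} [Finite β] (f : α → β) {y : β}
    (hy : y ∉ Set.range f) : Nat.card (Set.range f) < Nat.card β := by
  calc Nat.card (Set.range f) = (Set.range f).ncard := Nat.card_coe_set_eq _
    _ < (Set.univ : Set β).ncard := Set.ncard_lt_ncard
        ⟨Set.subset_univ _, fun h => hy (h (Set.mem_univ y))⟩ (Set.toFinite _)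
    _ = Nat.card β := Set.ncard_univ β

/-- For a cellular merge tree `(T,π)` with barcode `D`, the value of every branch point is
the right endpoint of some interval of `D`, and the value of every leaf is the left endpoint
of some interval of `D`. -/
theorem stmt12 (d : MergeTreeData) {A : Type} [TopologicalSpace A] (π : A → ℝ)
    (hiso : GaugedIso d.gauge π) (D : Multiset (ℝ × EReal)) (hD : HasBarcode π D) :
    (∀ v : Fin d.n, d.IsBranchNode v → ∃ I ∈ D, I.2 = (d.val v : EReal)) ∧
    (∀ v : Fin d.n, d.IsLeafNode v → ∃ I ∈ D, I.1 = d.val v) := by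
  
  obtain ⟨e, he⟩ := hiso
  classical
  have hsubφ : ∀ (t : ℝ) (x : ↥(sub d.gauge t)), e x.1 ∈ sub π t := by
    intro t x
    show π (e x.1) ≤ t
    rw [he]; exact x.2
  have hsubψ : ∀ (t : ℝ) (y : ↥(sub π t)), e.symm y.1 ∈ sub d.gauge t := by
    intro t y
    show d.gauge (e.symm y.1) ≤ t
    rw [← he (e.symm y.1), e.apply_symm_apply]
    exact y.2
  let φ : ∀ t : ℝ, ↥(sub d.gauge t) → ↥(sub π t) := fun t x => ⟨e x.1, hsubφ t x⟩
  let ψ : ∀ t : ℝ, ↥(sub π t) → ↥(sub d.gauge t) := fun t y => ⟨e.symm y.1, hsubψ t y⟩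
  have hφc : ∀ t, Continuous (φ t) := fun t =>
    (e.continuous.comp continuous_subtype_val).subtype_mk _
  have hψc : ∀ t, Continuous (ψ t) := fun t =>
    (e.symm.continuous.comp continuous_subtype_val).subtype_mk _
  have hψφ : ∀ (t : ℝ) (x : ↥(sub d.gauge t)), ψ t (φ t x) = x := by
    intro t x
    exact Subtype.ext (e.symm_apply_apply _)
  have hφψ : ∀ (t : ℝ) (y : ↥(sub π t)), φ t (ψ t y) = y := by
    intro t y
    exact Subtype.ext (e.apply_symm_apply _)
  -- finiteness of sublevel path components
  have hfin : ∀ t : ℝ, Finite (ZerothHomotopy ↥(sub π t)) := by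
    intro t
    have hsurj : Function.Surjective (fun w : {w : Fin d.n // d.val w ≤ t} =>
        (Quotient.mk'' (φ t ⟨d.pt w.1 (d.val w.1) le_rfl (fun _ => d.val_le_parent w.1),
          d.mem_sub_pt w.2⟩) : ZerothHomotopy ↥(sub π t))) := by
      intro z
      induction z using Quotient.inductionOn' with
      | h y =>
        obtain ⟨w, hw, hj⟩ := MergeTreeData.exists_node_joined (ψ t y)
        refine ⟨⟨w, hw⟩, Quotient.sound' ?_⟩
        have h2 : Joined (φ t ⟨d.pt w (d.val w) le_rfl (fun _ => d.val_le_parent w),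
            d.mem_sub_pt hw⟩) (φ t (ψ t y)) := ⟨hj.symm.somePath.map (hφc t)⟩
        rw [hφψ t] at h2
        exact h2
    exact Finite.of_surjective _ hsurj
  -- the rank at (t, t) equals the number of path components
  have hNtt : ∀ t : ℝ, Nat.card (ZerothHomotopy ↥(sub π t)) =
      (Multiset.filter (fun I => I.1 ≤ t ∧ (t : EReal) < I.2) D).card := by
    intro t
    have hs : Function.Surjective (pcMap (X := A) (S := sub π t) (T := sub π t)
        (fun _ hx => le_trans hx (le_refl t))) := by
      intro z
      induction z using Quotient.inductionOn' with
      | h y => exact ⟨Quotient.mk'' y, rfl⟩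
    have := hD.2 t t (le_refl t)
    rwa [Set.range_eq_univ.mpr hs, Nat.card_coe_set_eq, Set.ncard_univ] at this
  constructor
  · -- branch points
    intro v hv
    have hnt : Nontrivial {w : Fin d.n // d.parent w = v ∧ w ≠ v} :=
      Finite.one_lt_card_iff_nontrivial.mp (lt_of_lt_of_le one_lt_two hv)
    obtain ⟨⟨u₁, hu₁, hu₁'⟩, ⟨u₂, hu₂, hu₂'⟩, hne12⟩ := hnt
    have h12 : u₁ ≠ u₂ := fun h => hne12 (Subtype.ext h)
    set c := d.val (d.parent u₁) with hcdef
    have hcv : c = d.val v := by rw [hcdef, hu₁]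
    have hroot1 : u₁ ≠ d.root := by
      intro h
      rw [h, d.hroot] at hu₁
      exact hu₁' (h.trans hu₁)
    have hroot2 : u₂ ≠ d.root := by
      intro h
      rw [h, d.hroot] at hu₂
      exact hu₂' (h.trans hu₂)
    have hval1 : d.val u₁ < c := by
      rw [hcdef]; exact d.hval u₁ hroot1
    have hval2 : d.val u₂ < c := by
      rw [hcdef, hu₁, ← hu₂]; exact d.hval u₂ hroot2
    set B : Finset ℝ := insert (c - 1) (insert (d.val u₁) (insert (d.val u₂)
      ((D.toFinset.image (fun I => I.2.toReal)).filter (fun x => x < c)))) with hBdef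
    have hBne : B.Nonempty := ⟨c - 1, Finset.mem_insert_self _ _⟩
    set s := B.max' hBne with hsdef
    have hslt : s < c := by
      apply (Finset.max'_lt_iff B hBne).mpr
      intro x hx
      rw [hBdef] at hx
      simp only [Finset.mem_insert, Finset.mem_filter] at hx
      rcases hx with rfl | rfl | rfl | ⟨_, hx⟩
      · linarith
      · exact hval1
      · exact hval2
      · exact hx
    have hs1 : d.val u₁ ≤ s := Finset.le_max' B _ (by rw [hBdef]; simp)
    have hs2 : d.val u₂ ≤ s := Finset.le_max' B _ (by rw [hBdef]; simp)
    have hp1 : d.parent u₁ ≠ u₁ := by rw [hu₁]; exact fun h => hu₁' h.symm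
    have hpar : d.parent u₂ = d.parent u₁ := by rw [hu₁, hu₂]
    have hscp : s < d.val (d.parent u₁) := hslt
    set x₁ : ↥(sub d.gauge s) :=
      ⟨d.pt u₁ s hs1 (fun _ => hscp.le), d.mem_sub_pt le_rfl⟩ with hx₁
    set x₂ : ↥(sub d.gauge s) :=
      ⟨d.pt u₂ s hs2 (fun _ => by rw [hpar]; exact hscp.le), d.mem_sub_pt le_rfl⟩ with hx₂
    have hane : (Quotient.mk'' (φ s x₁) : ZerothHomotopy ↥(sub π s)) ≠ Quotient.mk'' (φ s x₂) := by
      intro h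
      have hj : Joined (φ s x₁) (φ s x₂) := Quotient.exact' h
      have hj2 : Joined (ψ s (φ s x₁)) (ψ s (φ s x₂)) := ⟨hj.somePath.map (hψc s)⟩
      rw [hψφ s, hψφ s] at hj2
      exact MergeTreeData.branch_not_joined hp1 h12 hpar hs1 hs2 hscp hj2
    have hjc : Joined (X := ↥(sub d.gauge (d.val (d.parent u₁))))
        ⟨d.pt u₁ s hs1 (fun _ => hscp.le), d.mem_sub_pt hscp.le⟩
        ⟨d.pt u₂ s hs2 (fun _ => by rw [hpar]; exact hscp.le), d.mem_sub_pt hscp.le⟩ :=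
      MergeTreeData.branch_joined hs1 hs2 hpar hscp
    have hmap : pcMap (X := A) (S := sub π s) (T := sub π c) (fun _ hx => le_trans hx hslt.le)
        (Quotient.mk'' (φ s x₁)) =
        pcMap (fun _ hx => le_trans hx hslt.le) (Quotient.mk'' (φ s x₂)) := by
      have hjA : Joined
          (Set.inclusion (fun _ hx => le_trans hx hslt.le) (φ s x₁))
          (Set.inclusion (fun _ hx => le_trans hx hslt.le) (φ s x₂)) := by
        have h0 : Joined (φ c ⟨d.pt u₁ s hs1 (fun _ => hscp.le), d.mem_sub_pt hscp.le⟩)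
            (φ c ⟨d.pt u₂ s hs2 (fun _ => by rw [hpar]; exact hscp.le), d.mem_sub_pt hscp.le⟩) :=
          ⟨hjc.somePath.map (hφc c)⟩
        have e1 : (φ c ⟨d.pt u₁ s hs1 (fun _ => hscp.le), d.mem_sub_pt hscp.le⟩) =
            Set.inclusion (fun _ hx => le_trans hx hslt.le) (φ s x₁) := Subtype.ext rfl
        have e2 : (φ c ⟨d.pt u₂ s hs2 (fun _ => by rw [hpar]; exact hscp.le),
            d.mem_sub_pt hscp.le⟩) =
            Set.inclusion (fun _ hx => le_trans hx hslt.le) (φ s x₂) := Subtype.ext rfl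
        rw [e1, e2] at h0
        exact h0
      exact Quotient.sound' hjA
    have hkey : (Multiset.filter (fun I => I.1 ≤ s ∧ (c : EReal) < I.2) D).card <
        (Multiset.filter (fun I => I.1 ≤ s ∧ (s : EReal) < I.2) D).card := by
      rw [← hD.2 s c hslt.le, ← hNtt s]
      haveI := hfin s
      exact card_range_lt _ hane hmap
    by_contra hcon
    push_neg at hcon
    have himp : ∀ I ∈ D, (I.1 ≤ s ∧ (s : EReal) < I.2) → (I.1 ≤ s ∧ (c : EReal) < I.2) := by
      rintro I hI ⟨hIs, hIs2⟩
      refine ⟨hIs, ?_⟩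
      rcases lt_or_ge (c : EReal) I.2 with h | h
      · exact h
      · exfalso
        have hne : I.2 ≠ (c : EReal) := by rw [hcv]; exact hcon I hI
        have hlt : I.2 < (c : EReal) := lt_of_le_of_ne h hne
        have hnt' : I.2 ≠ ⊤ := ne_top_of_lt hlt
        have hnb : I.2 ≠ ⊥ := ne_bot_of_gt hIs2
        have hcoe : ((I.2.toReal : ℝ) : EReal) = I.2 := EReal.coe_toReal hnt' hnb
        have hltc : I.2.toReal < c := by
          rw [← EReal.coe_lt_coe_iff, hcoe]; exact hlt
        have hmem : I.2.toReal ∈ B := by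
          rw [hBdef]
          apply Finset.mem_insert_of_mem
          apply Finset.mem_insert_of_mem
          apply Finset.mem_insert_of_mem
          rw [Finset.mem_filter]
          exact ⟨Finset.mem_image_of_mem _ (Multiset.mem_toFinset.mpr hI), hltc⟩
        have hle : I.2.toReal ≤ s := Finset.le_max' B _ hmem
        have : I.2 ≤ (s : EReal) := by rw [← hcoe]; exact EReal.coe_le_coe_iff.mpr hle
        exact absurd hIs2 (not_lt.mpr this)
    exact absurd hkey (not_lt.mpr (filter_card_le_of_imp D _ _ himp))
  · -- leaves
    intro l hl
    set b := d.val l with hbdef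
    set B' : Finset ℝ := insert (b - 1)
      ((D.toFinset.image (fun I => I.1)).filter (fun x => x < b)) with hB'def
    have hB'ne : B'.Nonempty := ⟨b - 1, Finset.mem_insert_self _ _⟩
    set s' := B'.max' hB'ne with hs'def
    have hs'b : s' < b := by
      apply (Finset.max'_lt_iff B' hB'ne).mpr
      intro x hx
      rw [hB'def] at hx
      simp only [Finset.mem_insert, Finset.mem_filter] at hx
      rcases hx with rfl | ⟨_, hx⟩
      · linarith
      · exact hx
    set x₀ : ↥(sub d.gauge b) :=
      ⟨d.pt l b hbdef.ge (fun h => (hbdef.trans_le (d.hval l h).le : b ≤ _)),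
        d.mem_sub_pt le_rfl⟩ with hx₀
    have hκ : (Quotient.mk'' (φ b x₀) : ZerothHomotopy ↥(sub π b)) ∉
        Set.range (pcMap (X := A) (S := sub π s') (T := sub π b)
          (fun _ hx => le_trans hx hs'b.le)) := by
      rintro ⟨z, hz⟩
      revert hz
      induction z using Quotient.inductionOn' with
      | h y =>
        intro hz
        have hj : Joined (Set.inclusion (fun _ hx => le_trans hx hs'b.le) y) (φ b x₀) :=
          Quotient.exact' hz
        have hj2 : Joined (ψ b (Set.inclusion (fun _ hx => le_trans hx hs'b.le) y))
            (ψ b (φ b x₀)) := ⟨hj.somePath.map (hψc b)⟩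
        rw [hψφ b] at hj2
        have hglow : d.gauge (ψ b (Set.inclusion (fun _ hx => le_trans hx hs'b.le) y)).1 ≤ s' := by
          show d.gauge (e.symm y.1) ≤ s'
          rw [← he (e.symm y.1), e.apply_symm_apply]
          exact y.2
        exact MergeTreeData.leaf_not_joined hl hs'b _ hglow hj2
    have hkey : (Multiset.filter (fun I => I.1 ≤ s' ∧ (b : EReal) < I.2) D).card <
        (Multiset.filter (fun I => I.1 ≤ b ∧ (b : EReal) < I.2) D).card := by
      rw [← hD.2 s' b hs'b.le, ← hNtt b]
      haveI := hfin b
      exact card_range_lt_of_notMem _ hκ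
    by_contra hcon
    push_neg at hcon
    have himp : ∀ I ∈ D, (I.1 ≤ b ∧ (b : EReal) < I.2) → (I.1 ≤ s' ∧ (b : EReal) < I.2) := by
      rintro I hI ⟨hIb, hIb2⟩
      refine ⟨?_, hIb2⟩
      have hne : I.1 ≠ b := by rw [hbdef]; exact hcon I hI
      have hlt : I.1 < b := lt_of_le_of_ne hIb hne
      have hmem : I.1 ∈ B' := by
        rw [hB'def]
        apply Finset.mem_insert_of_mem
        rw [Finset.mem_filter]
        exact ⟨Finset.mem_image_of_mem _ (Multiset.mem_toFinset.mpr hI), hlt⟩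
      exact Finset.le_max' B' _ hmem
    exact absurd hkey (not_lt.mpr (filter_card_le_of_imp D _ _ himp))
end
end
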